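/- arXiv:1610.01054 — 2 statements merged into one kernel-verified Lean document; each statement's English description precedes it below -/
import Mathlib

section
/- Let G be a finite group and D : G → U(n) an irreducible unitary representation of G on ℂⁿ. Then every n×n complex matrix ρ satisfies ρ = (n/|G|) · Σ_{g∈G} Tr(ρ · D(g)†) · D(g). -/
open Matrix BigOperators

section aux

variable {n : ℕ} {G : Type*} [Group G] [Fintype G]

lemma aux_star (D : G → Matrix (Fin n) (Fin n) ℂ)
    (hmul : ∀ g h : G, D (g * h) = D g * D h) (hone : D 1 = 1)
    (hunit : ∀ g : G, D g ∈ Matrix.unitaryGroup (Fin n) ℂ) (g : G) :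
    D g⁻¹ = (D g)ᴴ := by
  have h1 : D g⁻¹ * D g = 1 := by rw [← hmul, inv_mul_cancel, hone]
  have h2 : D g * (D g)ᴴ = 1 := by
    have := Matrix.mem_unitaryGroup_iff.mp (hunit g)
    simpa [Matrix.star_eq_conjTranspose] using this
  calc D g⁻¹ = D g⁻¹ * (D g * (D g)ᴴ) := by rw [h2, mul_one]
    _ = (D g⁻¹ * D g) * (D g)ᴴ := by rw [mul_assoc]
    _ = (D g)ᴴ := by rw [h1, one_mul]

lemma aux_schur (hn : 0 < n) (D : G → Matrix (Fin n) (Fin n) ℂ)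
    (hirr : ∀ W : Submodule ℂ (Fin n → ℂ),
      (∀ g : G, ∀ v ∈ W, (D g).mulVec v ∈ W) → W = ⊥ ∨ W = ⊤)
    (M : Matrix (Fin n) (Fin n) ℂ) (hM : ∀ g, D g * M = M * D g) :
    ∃ c : ℂ, M = c • 1 := by
  haveI : Nonempty (Fin n) := ⟨⟨0, hn⟩⟩
  haveI : Nontrivial (Fin n → ℂ) := by infer_instance
  obtain ⟨c, hc⟩ := Module.End.exists_eigenvalue (Matrix.mulVecLin M)
  refine ⟨c, ?_⟩
  have hW : ∀ g : G, ∀ v ∈ Module.End.eigenspace (Matrix.mulVecLin M) c,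
      (D g).mulVec v ∈ Module.End.eigenspace (Matrix.mulVecLin M) c := by
    intro g v hv
    rw [Module.End.mem_eigenspace_iff] at hv ⊢
    show M.mulVec ((D g).mulVec v) = c • (D g).mulVec v
    rw [Matrix.mulVec_mulVec, ← hM g, ← Matrix.mulVec_mulVec]
    rw [show Matrix.mulVecLin M v = M.mulVec v from rfl] at hv
    rw [hv, Matrix.mulVec_smul]
  rcases hirr _ hW with h | h
  · exact absurd h hc
  · ext i j
    have hmem : (Pi.single j 1 : Fin n → ℂ) ∈
        Module.End.eigenspace (Matrix.mulVecLin M) c := by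
      rw [h]; trivial
    rw [Module.End.mem_eigenspace_iff] at hmem
    have := congrFun hmem i
    show M i j = (c • (1 : Matrix (Fin n) (Fin n) ℂ)) i j
    simpa [Matrix.mulVecLin, Matrix.mulVec_single, Matrix.one_apply, Pi.single_apply,
      eq_comm, mul_comm] using this

lemma aux_mulE (A B : Matrix (Fin n) (Fin n) ℂ) (i j l k : Fin n) :
    (A * Matrix.single j l (1 : ℂ) * B) i k = A i j * B l k := by
  rw [mul_assoc, Matrix.mul_apply]
  rw [Finset.sum_eq_single j]
  · simp
  · intro b _ hb
    simp [Matrix.single_mul_apply_of_ne (h := hb)]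
  · simp

end aux

/-- Any matrix expands in an irreducible unitary representation of a finite group. -/
theorem stmt_0 {n : ℕ} (G : Type*) [Group G] [Fintype G]
    (D : G → Matrix (Fin n) (Fin n) ℂ)
    (hmul : ∀ g h : G, D (g * h) = D g * D h) (hone : D 1 = 1)
    (hunit : ∀ g : G, D g ∈ Matrix.unitaryGroup (Fin n) ℂ)
    (hirr : ∀ W : Submodule ℂ (Fin n → ℂ),
      (∀ g : G, ∀ v ∈ W, (D g).mulVec v ∈ W) → W = ⊥ ∨ W = ⊤)
    (ρ : Matrix (Fin n) (Fin n) ℂ) :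
    ρ = ((n : ℂ) / (Fintype.card G : ℂ)) •
      ∑ g : G, (ρ * (D g)ᴴ).trace • D g := by
  rcases Nat.eq_zero_or_pos n with hn | hn
  · subst hn; ext i j; exact i.elim0
  have hstar : ∀ g : G, (D g)ᴴ * D g = 1 := by
    intro g
    have := Matrix.mem_unitaryGroup_iff'.mp (hunit g)
    simpa [Matrix.star_eq_conjTranspose] using this
  have hstar' : ∀ g : G, D g * (D g)ᴴ = 1 := by
    intro g
    have := Matrix.mem_unitaryGroup_iff.mp (hunit g)
    simpa [Matrix.star_eq_conjTranspose] using this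
  have hcardG : (Fintype.card G : ℂ) ≠ 0 := by
    exact_mod_cast Nat.cast_ne_zero.mpr Fintype.card_ne_zero
  have hnne : (n : ℂ) ≠ 0 := Nat.cast_ne_zero.mpr hn.ne'
  -- the key orthogonality relations
  have orth : ∀ i j k l : Fin n,
      ∑ g : G, D g i j * star (D g k l) =
        (Fintype.card G : ℂ) * (if j = l then 1 else 0) / n *
          (if i = k then 1 else 0) := by
    intro i j k l
    set S : Matrix (Fin n) (Fin n) ℂ :=
      ∑ g : G, D g * Matrix.single j l 1 * (D g)ᴴ with hS
    have hcomm : ∀ h : G, D h * S = S * D h := by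
      intro h
      rw [hS, Finset.mul_sum, Finset.sum_mul]
      refine Fintype.sum_equiv (Equiv.mulLeft h) _ _ ?_
      intro g
      simp only [Equiv.coe_mulLeft]
      have key : (D (h * g))ᴴ * D h = (D g)ᴴ := by
        rw [hmul, Matrix.conjTranspose_mul, mul_assoc, hstar h, mul_one]
      have e1 : D (h * g) * Matrix.single j l (1 : ℂ) * (D (h * g))ᴴ * D h
          = D h * (D g * Matrix.single j l (1 : ℂ) * (D g)ᴴ) := by
        rw [mul_assoc _ _ (D h), key, hmul]
        simp only [mul_assoc]
      exact e1.symm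
    obtain ⟨c, hc⟩ := aux_schur hn D hirr S hcomm
    have htrS : S.trace = (Fintype.card G : ℂ) * (if j = l then 1 else 0) := by
      rw [hS, Matrix.trace_sum]
      have : ∀ g : G, (D g * Matrix.single j l 1 * (D g)ᴴ).trace
          = (if j = l then 1 else 0) := by
        intro g
        rw [Matrix.trace_mul_cycle, hstar g, one_mul]
        by_cases hjl : j = l
        · subst hjl; rw [Matrix.trace_single_eq_same]; simp
        · rw [Matrix.trace_single_eq_of_ne (h := hjl)]; simp [hjl]
      rw [Finset.sum_congr rfl (fun g _ => this g), Finset.sum_const,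
        Finset.card_univ, nsmul_eq_mul]
    have hcval : c = (Fintype.card G : ℂ) * (if j = l then 1 else 0) / n := by
      have : S.trace = c * n := by
        rw [hc, Matrix.trace_smul, Matrix.trace_one]
        simp [Fintype.card_fin]
      field_simp
      rw [← this, htrS]
    have hentry := congrFun (congrFun hc i) k
    rw [hS, Matrix.sum_apply] at hentry
    have : ∀ g : G, (D g * Matrix.single j l (1 : ℂ) * (D g)ᴴ) i k
        = D g i j * star (D g k l) := by
      intro g
      rw [aux_mulE, Matrix.conjTranspose_apply]
    rw [Finset.sum_congr rfl (fun g _ => this g)] at hentry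
    rw [hentry, hcval]
    by_cases hik : i = k <;> by_cases hjl : j = l <;>
      simp [hik, hjl, Matrix.smul_apply, Matrix.one_apply]
  -- now the main computation
  ext i j
  have htr : ∀ g : G, (ρ * (D g)ᴴ).trace = ∑ k : Fin n, ∑ l : Fin n,
      ρ k l * star (D g k l) := by
    intro g
    simp [Matrix.trace, Matrix.diag, Matrix.mul_apply, Matrix.conjTranspose_apply]
  rw [Matrix.smul_apply, Matrix.sum_apply]
  have step : ∀ g : G, ((ρ * (D g)ᴴ).trace • D g) i j
      = ∑ k : Fin n, ∑ l : Fin n, ρ k l * star (D g k l) * D g i j := by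
    intro g
    rw [Matrix.smul_apply, htr g, smul_eq_mul, Finset.sum_mul]
    congr 1; ext k
    rw [Finset.sum_mul]
  rw [Finset.sum_congr rfl (fun g _ => step g), Finset.sum_comm]
  have inner : ∀ k : Fin n, ∑ g : G, ∑ l : Fin n, ρ k l * star (D g k l) * D g i j
      = ∑ l : Fin n, ρ k l * ((Fintype.card G : ℂ) * (if j = l then 1 else 0) / n *
          (if i = k then 1 else 0)) := by
    intro k
    rw [Finset.sum_comm]
    refine Finset.sum_congr rfl fun l _ => ?_
    rw [← orth i j k l, Finset.mul_sum]
    refine Finset.sum_congr rfl fun g _ => ?_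
    ring
  rw [Finset.sum_congr rfl (fun k _ => inner k)]
  rw [Finset.sum_eq_single i]
  · rw [Finset.sum_eq_single j]
    · simp only [if_pos rfl, ite_true, eq_self_iff_true, mul_one]
      field_simp
      ring_nf
      simp [hcardG, hnne]
    · intro l _ hl
      simp [Ne.symm hl]
    · simp
  · intro k _ hk
    simp [Ne.symm hk]
  · simp
end

section
/- Theorem (structure of diagonalizing matrices): Let ρ be Hermitian with C† ρ C = diag(1_{c_1} ⊗ σ¹, …, 1_{c_N} ⊗ σ^N) for unitary C, where the σ^α are Hermitian matrices whose joint spectrum is simple across blocks (λ^α_j ≠ λ^β_k unless (α,j) = (β,k)). Then any unitary V with V† ρ V diagonal can be written V = C X P, where P is a permutation matrix and X = diag(X¹,…,X^N) with X^α = (Q^α_1 ⊗ r^α_1 | … | Q^α_{n_α} ⊗ r^α_{n_α}) for some unitary c_α × c_α matrices Q^α_j and orthonormal eigenvectors r^α_j of σ^α. -/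
open Matrix BigOperators Kronecker

/-- The matrix of a bijection between (finite) index types: a permutation matrix. -/
def permMatrix {α β : Type*} [DecidableEq β] (e : α ≃ β) : Matrix β α ℂ :=
  Matrix.of fun i j => if e j = i then 1 else 0

private lemma aux_lam_real {ν : ℕ} (σ : Matrix (Fin ν) (Fin ν) ℂ)
    (hsH : ∀ m m', star (σ m m') = σ m' m)
    (lam : ℂ) (r : Fin ν → ℂ)
    (heig : σ.mulVec r = lam • r)
    (horth : ∑ i, star (r i) * r i = (1 : ℂ)) :
    star lam = lam := by
  have h1 : ∑ m, star (r m) * (σ.mulVec r) m = lam := by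
    rw [heig]
    simp only [Pi.smul_apply, smul_eq_mul]
    calc ∑ m, star (r m) * (lam * r m) = lam * ∑ m, star (r m) * r m := by
          rw [Finset.mul_sum]; exact Finset.sum_congr rfl fun m _ => by ring
      _ = lam := by rw [horth, mul_one]
  have h2 : ∑ m, star (r m) * (σ.mulVec r) m
      = ∑ m, ∑ m', star (r m) * (σ m m' * r m') := by
    simp [Matrix.mulVec, dotProduct, Finset.mul_sum]
  have h3 : star (∑ m, ∑ m', star (r m) * (σ m m' * r m'))
      = ∑ m, ∑ m', star (r m) * (σ m m' * r m') := by
    rw [star_sum]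
    simp only [star_sum, star_mul', star_star]
    rw [Finset.sum_comm]
    refine Finset.sum_congr rfl fun m _ => Finset.sum_congr rfl fun m' _ => ?_
    rw [hsH m' m]
    ring
  rw [← h1, h2, h3]

private lemma aux_eig_eq {ν : ℕ} (σ : Matrix (Fin ν) (Fin ν) ℂ)
    (hsH : ∀ m m', star (σ m m') = σ m' m)
    (lam μ : ℂ) (hlr : star lam = lam) (r v : Fin ν → ℂ)
    (heig : σ.mulVec r = lam • r)
    (hv : ∀ m, ∑ m', σ m m' * v m' = μ * v m)
    (hT : (∑ m, star (r m) * v m) ≠ 0) : lam = μ := by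
  have hcol : ∀ m', ∑ m, star (r m) * σ m m' = star lam * star (r m') := by
    intro m'
    have h := congrFun heig m'
    have h' : ∑ m, σ m' m * r m = lam * r m' := by
      simpa [Matrix.mulVec, dotProduct] using h
    calc ∑ m, star (r m) * σ m m' = star (∑ m, σ m' m * r m) := by
          rw [star_sum]
          exact Finset.sum_congr rfl fun m _ => by rw [star_mul', hsH m' m]; ring
      _ = star (lam * r m') := by rw [h']
      _ = star lam * star (r m') := by rw [star_mul']
  have key : lam * ∑ m, star (r m) * v m = μ * ∑ m, star (r m) * v m := by
    calc lam * ∑ m, star (r m) * v m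
        = ∑ m', (star lam * star (r m')) * v m' := by
          rw [hlr, Finset.mul_sum]
          exact Finset.sum_congr rfl fun m' _ => by ring
      _ = ∑ m', (∑ m, star (r m) * σ m m') * v m' :=
          Finset.sum_congr rfl fun m' _ => by rw [hcol m']
      _ = ∑ m, star (r m) * ∑ m', σ m m' * v m' := by
          simp only [Finset.sum_mul, Finset.mul_sum]
          rw [Finset.sum_comm]
          exact Finset.sum_congr rfl fun m _ => Finset.sum_congr rfl fun m' _ => by ring
      _ = ∑ m, star (r m) * (μ * v m) :=
          Finset.sum_congr rfl fun m _ => by rw [hv m]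
      _ = μ * ∑ m, star (r m) * v m := by
          rw [Finset.mul_sum]; exact Finset.sum_congr rfl fun m _ => by ring
  exact mul_right_cancel₀ hT key

private lemma aux_complete {ν : ℕ} (r : Fin ν → Fin ν → ℂ)
    (horth : ∀ j k, ∑ i, star (r j i) * r k i = (if j = k then 1 else 0 : ℂ)) :
    ∀ m m', ∑ j, star (r j m') * r j m = (if m' = m then 1 else 0 : ℂ) := by
  have hRR : (Matrix.of fun j m => r j m) * (Matrix.of fun j m => r j m)ᴴ = 1 := by
    ext j k
    rw [Matrix.mul_apply]
    simp only [Matrix.conjTranspose_apply, Matrix.of_apply, Matrix.one_apply]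
    calc ∑ m, r j m * star (r k m) = star (∑ m, star (r j m) * r k m) := by
          rw [star_sum]; exact Finset.sum_congr rfl fun m _ => by rw [star_mul', star_star]
      _ = _ := by rw [horth j k]; split <;> simp
  have hRR' := mul_eq_one_comm.mp hRR
  intro m m'
  have := congrFun (congrFun hRR' m') m
  simpa only [Matrix.mul_apply, Matrix.conjTranspose_apply, Matrix.of_apply,
    Matrix.one_apply] using this

private lemma aux_expand {ν : ℕ} (r : Fin ν → Fin ν → ℂ) (v : Fin ν → ℂ)
    (hcomp : ∀ m m', ∑ j, star (r j m') * r j m = (if m' = m then 1 else 0 : ℂ)) (m : Fin ν) :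
    v m = ∑ j, (∑ m', star (r j m') * v m') * r j m := by
  calc v m = ∑ m', v m' * (if m' = m then 1 else 0 : ℂ) := by
        simp [Finset.sum_ite_eq' Finset.univ m v]
    _ = ∑ m', v m' * ∑ j, star (r j m') * r j m :=
        Finset.sum_congr rfl fun m' _ => by rw [hcomp]
    _ = ∑ j, (∑ m', star (r j m') * v m') * r j m := by
        simp only [Finset.mul_sum, Finset.sum_mul]
        rw [Finset.sum_comm]
        exact Finset.sum_congr rfl fun j _ => Finset.sum_congr rfl fun m' _ => by ring

private lemma aux_card_le {cc : ℕ} {η : Type*} [Fintype η] [DecidableEq η] (q : η → Fin cc → ℂ)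
    (horth : ∀ x y, ∑ b, star (q x b) * q y b = (if x = y then 1 else 0 : ℂ)) :
    Fintype.card η ≤ cc := by
  have hli : LinearIndependent ℂ q := by
    rw [Fintype.linearIndependent_iff]
    intro a ha y
    have h0 : ∀ b, ∑ x, a x * q x b = 0 := by
      intro b
      have := congrFun ha b
      simpa using this
    calc a y = ∑ x, a x * (if y = x then 1 else 0 : ℂ) := by simp
      _ = ∑ x, a x * ∑ b, star (q y b) * q x b :=
          Finset.sum_congr rfl fun x _ => by rw [horth]
      _ = ∑ b, star (q y b) * ∑ x, a x * q x b := by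
          simp only [Finset.mul_sum]
          rw [Finset.sum_comm]
          exact Finset.sum_congr rfl fun b _ => Finset.sum_congr rfl fun x _ => by ring
      _ = 0 := by simp [h0]
  have := hli.fintype_card_le_finrank
  simpa [Module.finrank_fintype_fun_eq_card] using this

/-- Structure of diagonalizing matrices of a generic adapted state: any unitary `V`
with `V† ρ V` diagonal factors as `V = C X P` with `P` a permutation matrix and
`X = diag(X¹,…,X^N)`, `X^α = (Q^α_1 ⊗ r^α_1 | … | Q^α_{n_α} ⊗ r^α_{n_α})` for some
unitary matrices `Q^α_j`, where `r^α_j` are the given orthonormal eigenvectors of `σ^α`. -/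
theorem stmt_13 {N : ℕ} (c n : Fin N → ℕ)
    (ρ : Matrix (Σ α : Fin N, Fin (c α) × Fin (n α))
        (Σ α : Fin N, Fin (c α) × Fin (n α)) ℂ)
    (hherm : ρ.IsHermitian)
    (C : Matrix (Σ α : Fin N, Fin (c α) × Fin (n α))
        (Σ α : Fin N, Fin (c α) × Fin (n α)) ℂ)
    (hCU : C ∈ Matrix.unitaryGroup (Σ α : Fin N, Fin (c α) × Fin (n α)) ℂ)
    (σ : ∀ α : Fin N, Matrix (Fin (n α)) (Fin (n α)) ℂ)
    (hσ : ∀ α, (σ α).IsHermitian)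
    (hC : Cᴴ * ρ * C =
      Matrix.blockDiagonal' fun α => (1 : Matrix (Fin (c α)) (Fin (c α)) ℂ) ⊗ₖ σ α)
    (lam : ∀ α : Fin N, Fin (n α) → ℂ)
    (r : ∀ α : Fin N, Fin (n α) → Fin (n α) → ℂ)
    (heig : ∀ α j, (σ α).mulVec (r α j) = lam α j • r α j)
    (horth : ∀ α j k, ∑ i, star (r α j i) * r α k i = (if j = k then 1 else 0 : ℂ))
    (hgen : ∀ (α β : Fin N) (j : Fin (n α)) (k : Fin (n β)),
      lam α j = lam β k → (⟨α, j⟩ : Σ α : Fin N, Fin (n α)) = ⟨β, k⟩)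
    (V : Matrix (Σ α : Fin N, Fin (c α) × Fin (n α))
        (Σ α : Fin N, Fin (c α) × Fin (n α)) ℂ)
    (hVU : V ∈ Matrix.unitaryGroup (Σ α : Fin N, Fin (c α) × Fin (n α)) ℂ)
    (hdiag : ∀ i j, i ≠ j → (Vᴴ * ρ * V) i j = 0) :
    ∃ (Q : ∀ α : Fin N, Fin (n α) → Matrix (Fin (c α)) (Fin (c α)) ℂ)
      (hQ : ∀ α j, Q α j ∈ Matrix.unitaryGroup (Fin (c α)) ℂ)
      (e : (Σ α : Fin N, Fin (c α) × Fin (n α)) ≃ (Σ α : Fin N, Fin (n α) × Fin (c α))),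
      V = C *
        Matrix.blockDiagonal' (fun α =>
          Matrix.of fun (p : Fin (c α) × Fin (n α)) (q : Fin (n α) × Fin (c α)) =>
            Q α q.1 p.1 q.2 * r α q.1 p.2) *
        permMatrix e := by
  classical
  have hCl : Cᴴ * C = 1 := hCU.1
  have hCr : C * Cᴴ = 1 := hCU.2
  have hVl : Vᴴ * V = 1 := hVU.1
  set W := Cᴴ * V with hWdef
  have hWl : Wᴴ * W = 1 := by
    rw [hWdef, conjTranspose_mul, conjTranspose_conjTranspose, Matrix.mul_assoc,
      ← Matrix.mul_assoc C Cᴴ V, hCr, Matrix.one_mul, hVl]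
  have hWr : W * Wᴴ = 1 := mul_eq_one_comm.mp hWl
  have hρ : ρ = C * (Matrix.blockDiagonal' fun α =>
      (1 : Matrix (Fin (c α)) (Fin (c α)) ℂ) ⊗ₖ σ α) * Cᴴ := by
    rw [← hC]
    simp only [← Matrix.mul_assoc]
    rw [hCr, Matrix.one_mul, Matrix.mul_assoc, hCr, Matrix.mul_one]
  have hLam : Wᴴ * (Matrix.blockDiagonal' fun α =>
      (1 : Matrix (Fin (c α)) (Fin (c α)) ℂ) ⊗ₖ σ α) * W = Vᴴ * ρ * V := by
    conv_rhs => rw [hρ]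
    rw [hWdef, conjTranspose_mul, conjTranspose_conjTranspose]
    simp only [Matrix.mul_assoc]
  have hDW : (Matrix.blockDiagonal' fun α =>
      (1 : Matrix (Fin (c α)) (Fin (c α)) ℂ) ⊗ₖ σ α) * W = W * (Vᴴ * ρ * V) := by
    calc (Matrix.blockDiagonal' fun α =>
        (1 : Matrix (Fin (c α)) (Fin (c α)) ℂ) ⊗ₖ σ α) * W
        = (W * Wᴴ) * ((Matrix.blockDiagonal' fun α =>
            (1 : Matrix (Fin (c α)) (Fin (c α)) ℂ) ⊗ₖ σ α) * W) := by
          rw [hWr, Matrix.one_mul]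
      _ = W * (Wᴴ * (Matrix.blockDiagonal' fun α =>
            (1 : Matrix (Fin (c α)) (Fin (c α)) ℂ) ⊗ₖ σ α) * W) := by
          simp only [Matrix.mul_assoc]
      _ = W * (Vᴴ * ρ * V) := by rw [hLam]
  -- Hermiticity of blocks, entrywise
  have hsH : ∀ α (m m' : Fin (n α)), star (σ α m m') = σ α m' m := by
    intro α m m'
    have := congrFun (congrFun (hσ α) m') m
    simpa [Matrix.conjTranspose_apply] using this
  -- eigenvalues are real
  have hlr : ∀ α j, star (lam α j) = lam α j := by
    intro α j
    refine aux_lam_real (σ α) (hsH α) (lam α j) (r α j) (heig α j) ?_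
    have := horth α j j
    simpa using this
  -- columns of W are eigenvectors blockwise
  have heigW : ∀ (k : Σ α : Fin N, Fin (c α) × Fin (n α)) (α : Fin N) (b : Fin (c α))
      (m : Fin (n α)),
      ∑ m', σ α m m' * W ⟨α, (b, m')⟩ k = (Vᴴ * ρ * V) k k * W ⟨α, (b, m)⟩ k := by
    intro k α b m
    have h1 := congrFun (congrFun hDW ⟨α, (b, m)⟩) k
    rw [Matrix.mul_apply, Matrix.mul_apply] at h1
    have hR : ∑ k', W ⟨α, (b, m)⟩ k' * (Vᴴ * ρ * V) k' k
        = W ⟨α, (b, m)⟩ k * (Vᴴ * ρ * V) k k := by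
      refine Finset.sum_eq_single k (fun k' _ hne => ?_) (by simp)
      rw [hdiag k' k hne, mul_zero]
    rw [hR] at h1
    have hL : (∑ i' : (Σ α : Fin N, Fin (c α) × Fin (n α)),
        (Matrix.blockDiagonal' fun α =>
          (1 : Matrix (Fin (c α)) (Fin (c α)) ℂ) ⊗ₖ σ α) ⟨α, (b, m)⟩ i' * W i' k)
        = ∑ m', σ α m m' * W ⟨α, (b, m')⟩ k := by
      rw [← Finset.univ_sigma_univ, Finset.sum_sigma]
      rw [Finset.sum_eq_single α (fun β _ hne => ?_) (by simp)]
      · rw [Fintype.sum_prod_type]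
        rw [Finset.sum_eq_single b (fun b' _ hne => ?_) (by simp)]
        · refine Finset.sum_congr rfl fun m' _ => ?_
          rw [Matrix.blockDiagonal'_apply_eq, kroneckerMap_apply, one_apply_eq, one_mul]
        · refine Finset.sum_eq_zero fun m' _ => ?_
          rw [Matrix.blockDiagonal'_apply_eq, kroneckerMap_apply,
            one_apply_ne (fun h => hne h.symm), zero_mul, zero_mul]
      · refine Finset.sum_eq_zero fun p _ => ?_
        rw [Matrix.blockDiagonal'_apply_ne _ _ _ (fun h => hne h.symm), zero_mul]
    rw [hL] at h1
    rw [h1, mul_comm]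
  -- completeness of each eigenbasis
  have hcomp : ∀ α (m m' : Fin (n α)),
      ∑ j, star (r α j m') * r α j m = (if m' = m then 1 else 0 : ℂ) :=
    fun α => aux_complete (r α) (horth α)
  -- expansion of columns of W
  have hB : ∀ (k : Σ α : Fin N, Fin (c α) × Fin (n α)) (α : Fin N) (b : Fin (c α))
      (m : Fin (n α)),
      W ⟨α, (b, m)⟩ k = ∑ j, (∑ m', star (r α j m') * W ⟨α, (b, m')⟩ k) * r α j m :=
    fun k α b m => aux_expand (r α) (fun m => W ⟨α, (b, m)⟩ k) (hcomp α) m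
  -- nonvanishing coefficient forces the eigenvalue
  have hA : ∀ (k : Σ α : Fin N, Fin (c α) × Fin (n α)) (α : Fin N) (b : Fin (c α))
      (j : Fin (n α)),
      (∑ m, star (r α j m) * W ⟨α, (b, m)⟩ k) ≠ 0 → lam α j = (Vᴴ * ρ * V) k k :=
    fun k α b j hT => aux_eig_eq (σ α) (hsH α) (lam α j) ((Vᴴ * ρ * V) k k) (hlr α j)
      (r α j) (fun m => W ⟨α, (b, m)⟩ k) (heig α j) (heigW k α b) hT
  -- existence of the eigenvalue label for each column
  have hex : ∀ k : Σ α : Fin N, Fin (c α) × Fin (n α),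
      ∃ p : Σ α : Fin N, Fin (n α), lam p.1 p.2 = (Vᴴ * ρ * V) k k := by
    intro k
    have h1 : (Wᴴ * W) k k = 1 := by rw [hWl]; simp [Matrix.one_apply]
    have h2 : ∑ i, star (W i k) * W i k = 1 := by
      rw [Matrix.mul_apply] at h1
      simpa [Matrix.conjTranspose_apply] using h1
    have h3 : ∃ i, W i k ≠ 0 := by
      by_contra h
      push_neg at h
      rw [Finset.sum_eq_zero (fun i _ => by rw [h i, mul_zero])] at h2
      exact one_ne_zero h2.symm
    obtain ⟨⟨α, b, m⟩, hWne⟩ := h3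
    have h4 : ∃ j, (∑ m', star (r α j m') * W ⟨α, (b, m')⟩ k) ≠ 0 := by
      by_contra h
      push_neg at h
      rw [hB k α b m, Finset.sum_eq_zero (fun j _ => by rw [h j, zero_mul])] at hWne
      exact hWne rfl
    obtain ⟨j, hj⟩ := h4
    exact ⟨⟨α, j⟩, hA k α b j hj⟩
  choose g hg using hex
  -- nonvanishing coefficient identifies the label
  have hA' : ∀ (k : Σ α : Fin N, Fin (c α) × Fin (n α)) (α : Fin N) (b : Fin (c α))
      (j : Fin (n α)),
      (∑ m, star (r α j m) * W ⟨α, (b, m)⟩ k) ≠ 0 →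
      g k = (⟨α, j⟩ : Σ α : Fin N, Fin (n α)) := by
    intro k α b j hT
    have h1 : lam α j = lam (g k).1 (g k).2 := (hA k α b j hT).trans (hg k).symm
    have h2 := hgen α (g k).1 j (g k).2 h1
    rw [Sigma.eta] at h2
    exact h2.symm
  -- structure of columns of W
  have hstruct : ∀ (k : Σ α : Fin N, Fin (c α) × Fin (n α)) (α : Fin N) (j : Fin (n α))
      (b : Fin (c α)) (m : Fin (n α)), g k = ⟨α, j⟩ →
      W ⟨α, (b, m)⟩ k = (∑ m', star (r α j m') * W ⟨α, (b, m')⟩ k) * r α j m := by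
    intro k α j b m hgk
    rw [hB k α b m]
    refine Finset.sum_eq_single j (fun j' _ hne => ?_) (by simp)
    have hT : (∑ m', star (r α j' m') * W ⟨α, (b, m')⟩ k) = 0 := by
      by_contra hT
      have := (hgk.symm.trans (hA' k α b j' hT))
      have : j = j' := by simpa using this
      exact hne this.symm
    rw [hT, zero_mul]
  have h0 : ∀ (k : Σ α : Fin N, Fin (c α) × Fin (n α)) (α : Fin N) (j : Fin (n α))
      (β : Fin N) (b : Fin (c β)) (m : Fin (n β)), g k = ⟨α, j⟩ → β ≠ α →
      W ⟨β, (b, m)⟩ k = 0 := by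
    intro k α j β b m hgk hba
    rw [hB k β b m]
    refine Finset.sum_eq_zero fun j' _ => ?_
    have hT : (∑ m', star (r β j' m') * W ⟨β, (b, m')⟩ k) = 0 := by
      by_contra hT
      have h1 := hgk.symm.trans (hA' k β b j' hT)
      have : α = β := congrArg Sigma.fst h1
      exact hba this.symm
    rw [hT, zero_mul]
  -- orthonormality of the reduced vectors within a fiber
  have horthW : ∀ (α : Fin N) (j : Fin (n α)) (k k' : Σ α : Fin N, Fin (c α) × Fin (n α)),
      g k = ⟨α, j⟩ → g k' = ⟨α, j⟩ →
      ∑ b, star (∑ m, star (r α j m) * W ⟨α, (b, m)⟩ k) *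
        (∑ m, star (r α j m) * W ⟨α, (b, m)⟩ k')
      = (if k = k' then 1 else 0 : ℂ) := by
    intro α j k k' hk hk'
    have h1 : ∑ i, star (W i k) * W i k' = (if k = k' then 1 else 0 : ℂ) := by
      have := congrFun (congrFun hWl k) k'
      rw [Matrix.mul_apply] at this
      simpa [Matrix.conjTranspose_apply, Matrix.one_apply] using this
    rw [← h1]
    conv_rhs => rw [← Finset.univ_sigma_univ, Finset.sum_sigma]
    rw [Finset.sum_eq_single α (fun β _ hne => ?_) (by simp)]
    · rw [Fintype.sum_prod_type]
      refine Finset.sum_congr rfl fun b _ => ?_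
      calc star (∑ m, star (r α j m) * W ⟨α, (b, m)⟩ k) *
            (∑ m, star (r α j m) * W ⟨α, (b, m)⟩ k')
          = (star (∑ m, star (r α j m) * W ⟨α, (b, m)⟩ k) *
              (∑ m, star (r α j m) * W ⟨α, (b, m)⟩ k')) *
            (∑ m, star (r α j m) * r α j m) := by
            rw [horth α j j, if_pos rfl, mul_one]
        _ = ∑ m, star (W ⟨α, (b, m)⟩ k) * W ⟨α, (b, m)⟩ k' := by
            rw [Finset.mul_sum]
            refine Finset.sum_congr rfl fun m _ => ?_
            rw [hstruct k α j b m hk, hstruct k' α j b m hk']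
            simp only [star_mul', star_star]
            ring
    · refine Finset.sum_eq_zero fun p _ => ?_
      rw [h0 k α j β p.1 p.2 hk hne, star_zero, zero_mul]
  -- cardinality of the fibers
  have hcard : ∀ p : Σ α : Fin N, Fin (n α),
      Fintype.card {k : Σ α : Fin N, Fin (c α) × Fin (n α) // g k = p} = c p.1 := by
    have hle : ∀ p : Σ α : Fin N, Fin (n α),
        Fintype.card {k : Σ α : Fin N, Fin (c α) × Fin (n α) // g k = p} ≤ c p.1 := by
      intro p
      refine aux_card_le
        (fun x b => ∑ m, star (r p.1 p.2 m) * W ⟨p.1, (b, m)⟩ x.1) ?_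
      intro x y
      have hx : g x.1 = (⟨p.1, p.2⟩ : Σ α : Fin N, Fin (n α)) := by
        rw [Sigma.eta]; exact x.2
      have hy : g y.1 = (⟨p.1, p.2⟩ : Σ α : Fin N, Fin (n α)) := by
        rw [Sigma.eta]; exact y.2
      have h1 := horthW p.1 p.2 x.1 y.1 hx hy
      rw [h1]
      by_cases h : x = y
      · simp [h]
      · rw [if_neg h, if_neg (fun hh => h (Subtype.ext hh))]
    have htot : ∑ p : Σ α : Fin N, Fin (n α),
        Fintype.card {k : Σ α : Fin N, Fin (c α) × Fin (n α) // g k = p}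
        = ∑ p : Σ α : Fin N, Fin (n α), c p.1 := by
      have h1 : ∑ p : Σ α : Fin N, Fin (n α),
          Fintype.card {k : Σ α : Fin N, Fin (c α) × Fin (n α) // g k = p}
          = Fintype.card (Σ α : Fin N, Fin (c α) × Fin (n α)) := by
        rw [← Fintype.card_sigma]
        exact Fintype.card_congr (Equiv.sigmaFiberEquiv g)
      rw [h1]
      rw [Fintype.card_sigma]
      conv_rhs => rw [← Finset.univ_sigma_univ, Finset.sum_sigma]
      simp [mul_comm]
    intro p
    exact (Finset.sum_eq_sum_iff_of_le (fun p _ => hle p)).mp htot p (Finset.mem_univ p)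
  have φ : ∀ p : Σ α : Fin N, Fin (n α),
      Fin (c p.1) ≃ {k : Σ α : Fin N, Fin (c α) × Fin (n α) // g k = p} :=
    fun p => (Fintype.equivFinOfCardEq (hcard p)).symm
  refine ⟨fun α j => Matrix.of fun b s =>
      ∑ m, star (r α j m) * W ⟨α, (b, m)⟩ (φ ⟨α, j⟩ s).1, ?_,
    (Equiv.sigmaFiberEquiv g).symm.trans
      ((Equiv.sigmaCongrRight fun p => (φ p).symm).trans
        ⟨fun x => ⟨x.1.1, (x.1.2, x.2)⟩, fun y => ⟨⟨y.1, y.2.1⟩, y.2.2⟩,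
          fun x => rfl, fun y => rfl⟩), ?_⟩
  · -- unitarity of Q
    intro α j
    rw [Matrix.mem_unitaryGroup_iff']
    ext s s'
    rw [Matrix.mul_apply]
    simp only [Matrix.star_apply, Matrix.of_apply]
    have hk : g (φ ⟨α, j⟩ s).1 = (⟨α, j⟩ : Σ α : Fin N, Fin (n α)) := (φ ⟨α, j⟩ s).2
    have hk' : g (φ ⟨α, j⟩ s').1 = (⟨α, j⟩ : Σ α : Fin N, Fin (n α)) := (φ ⟨α, j⟩ s').2
    rw [horthW α j (φ ⟨α, j⟩ s).1 (φ ⟨α, j⟩ s').1 hk hk']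
    by_cases h : s = s'
    · subst h
      rw [if_pos rfl, Matrix.one_apply_eq]
    · rw [if_neg (fun hh => h ((φ ⟨α, j⟩).injective (Subtype.ext hh))),
        Matrix.one_apply_ne h]
  · -- the factorization
    have hV : V = C * W := by
      rw [hWdef, ← Matrix.mul_assoc, hCr, Matrix.one_mul]
    rw [hV, Matrix.mul_assoc]
    congr 1
    ext ⟨α, b, m⟩ k
    rw [Matrix.mul_apply]
    rw [Finset.sum_eq_single
      (⟨(g k).1, ((g k).2, (φ (g k)).symm ⟨k, rfl⟩)⟩ : Σ α : Fin N, Fin (n α) × Fin (c α))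
      (fun y _ hne => ?_) (by simp)]
    · have hperm : permMatrix
          ((Equiv.sigmaFiberEquiv g).symm.trans
            ((Equiv.sigmaCongrRight fun p => (φ p).symm).trans
              ⟨fun x => ⟨x.1.1, (x.1.2, x.2)⟩, fun y => ⟨⟨y.1, y.2.1⟩, y.2.2⟩,
                fun x => rfl, fun y => rfl⟩))
          (⟨(g k).1, ((g k).2, (φ (g k)).symm ⟨k, rfl⟩)⟩ :
            Σ α : Fin N, Fin (n α) × Fin (c α)) k = 1 := by
        simp only [permMatrix, Matrix.of_apply]
        rw [if_pos]
        rfl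
      rw [hperm, mul_one]
      by_cases h : α = (g k).1
      · subst h
        rw [Matrix.blockDiagonal'_apply_eq, Matrix.of_apply]
        have hφ : (φ (g k)) ((φ (g k)).symm ⟨k, rfl⟩) = ⟨k, rfl⟩ :=
          Equiv.apply_symm_apply _ _
        show W ⟨(g k).1, (b, m)⟩ k
          = (∑ m', star (r (g k).1 (g k).2 m') *
              W ⟨(g k).1, (b, m')⟩ ((φ (g k)) ((φ (g k)).symm ⟨k, rfl⟩)).1) *
            r (g k).1 (g k).2 m
        rw [hφ]
        exact hstruct k (g k).1 (g k).2 b m (Sigma.eta (g k)).symm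
      · rw [Matrix.blockDiagonal'_apply_ne _ _ _ h]
        exact h0 k (g k).1 (g k).2 α b m (Sigma.eta (g k)).symm h
    · have : permMatrix
          ((Equiv.sigmaFiberEquiv g).symm.trans
            ((Equiv.sigmaCongrRight fun p => (φ p).symm).trans
              ⟨fun x => ⟨x.1.1, (x.1.2, x.2)⟩, fun y => ⟨⟨y.1, y.2.1⟩, y.2.2⟩,
                fun x => rfl, fun y => rfl⟩)) y k = 0 := by
        simp only [permMatrix, Matrix.of_apply]
        rw [if_neg]
        intro hh
        apply hne
        rw [← hh]
        rfl
      rw [this, mul_zero]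
end
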